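/- arXiv:1712.00918 — 4 statements merged into one kernel-verified Lean document; each statement's English description precedes it below -/
import Mathlib

section
/- Let X be a (c,2,4)-hypercontractive real-valued random variable with μ₂(X) = σ² > 0. Then for t = σ/2 and δ = 9/(128·(c+2)⁴), one has Q_X(t) ≤ 1 − δ. -/
open MeasureTheory ProbabilityTheory

/-- The Lévy concentration function `Q_X(t) = sup_a Pr[a ≤ X ≤ a + t]`. -/
noncomputable def levyConc {Ω : Type*} [MeasurableSpace Ω] (μ : Measure Ω)
    (X : Ω → ℝ) (t : ℝ) : ℝ :=
  ⨆ a : ℝ, (μ {ω | a ≤ X ω ∧ X ω ≤ a + t}).toReal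

/-- The `j`-th absolute central moment `μ_j(X) = E[|X - E[X]|^j]`. -/
noncomputable def absCentralMoment {Ω : Type*} [MeasurableSpace Ω] (μ : Measure Ω)
    (X : Ω → ℝ) (j : ℕ) : ℝ :=
  ∫ ω, |X ω - ∫ ω', X ω' ∂μ| ^ j ∂μ

/-- `X` is `(c,2,4)`-hypercontractive if `μ₄(X) ≤ c⁴ ⬝ μ₂(X)²`. -/
def Hypercontractive {Ω : Type*} [MeasurableSpace Ω] (μ : Measure Ω)
    (X : Ω → ℝ) (c : ℝ) : Prop :=
  absCentralMoment μ X 4 ≤ c ^ 4 * (absCentralMoment μ X 2) ^ 2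

/-! The interval `[a, a + σ/2]` is `{|X - m| ≤ σ/4}` for its midpoint `m`, so it suffices to bound
`P(|X - m| > σ/4)` from below uniformly in `m`. Paley–Zygmund applied to `Y = (X - m)²` does this:
with `d = E X - m` one has `E Y = σ² + d²` and `E Y² ≤ 8 (μ₄ + d⁴) ≤ 8 (c⁴σ⁴ + d⁴)`, and the ratio
`(E Y - σ²/16)² / (8 (c⁴σ⁴ + d⁴))` is at least `9 / (128 (c + 2)⁴)` whatever `d` is. -/

lemma two_mul_sub_le_sq_add_indicator {a t y : ℝ} (ha : 0 ≤ a) (ht : 0 ≤ t) :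
    2 * a * (y - t) ≤ a ^ 2 * y ^ 2 + {x | t < x}.indicator (fun _ ↦ 1) y := by
  rw [Set.indicator_apply]
  split_ifs with hy
  · nlinarith [sq_nonneg (a * y - 1), hy.out]
  · nlinarith [(not_lt.1 hy : y ≤ t)]

lemma nine_div_mul_pow_four_add_pow_four_le_sq {c σ d : ℝ} (hc : 0 ≤ c) :
    9 / (128 * (c + 2) ^ 4) * (8 * (c ^ 4 * σ ^ 4 + d ^ 4))
      ≤ (σ ^ 2 + d ^ 2 - (σ / 4) ^ 2) ^ 2 := by
  have hc4 : c ^ 4 ≤ (c + 2) ^ 4 := pow_le_pow_left₀ hc (by linarith) 4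
  have h16 : 2 ^ 4 ≤ (c + 2) ^ 4 := pow_le_pow_left₀ zero_le_two (by linarith) 4
  rw [div_mul_eq_mul_div, div_le_iff₀ (by positivity)]
  nlinarith [mul_le_mul_of_nonneg_left hc4 (by positivity : (0 : ℝ) ≤ σ ^ 4),
    mul_le_mul_of_nonneg_left h16 (by positivity : (0 : ℝ) ≤ d ^ 4),
    mul_nonneg (by positivity : (0 : ℝ) ≤ (c + 2) ^ 4) (mul_nonneg (sq_nonneg σ) (sq_nonneg d)),
    mul_nonneg (by positivity : (0 : ℝ) ≤ (c + 2) ^ 4) (pow_nonneg (sq_nonneg σ) 2)]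

section

variable {Ω : Type*} [MeasurableSpace Ω] {μ : Measure Ω} {X : Ω → ℝ}

lemma absCentralMoment_two_eq_variance (hX : AEMeasurable X μ) :
    absCentralMoment μ X 2 = Var[X; μ] := by
  simp only [absCentralMoment, sq_abs, variance_eq_integral hX]

lemma absCentralMoment_four_eq_integral :
    absCentralMoment μ X 4 = ∫ ω, (X ω - μ[X]) ^ 4 ∂μ := by
  simp only [absCentralMoment, (by decide : Even 4).pow_abs]

lemma MeasureTheory.MemLp.integrable_pow_of_even [IsFiniteMeasure μ] {n : ℕ} (hX : MemLp X n μ)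
    (hn : Even n) : Integrable (fun ω ↦ X ω ^ n) μ := by
  simpa [Real.norm_eq_abs, hn.pow_abs] using hX.integrable_norm_pow'

variable [IsProbabilityMeasure μ]

theorem paley_zygmund {Y : Ω → ℝ} (hY : Integrable Y μ) (hY2 : Integrable (fun ω ↦ Y ω ^ 2) μ)
    {t : ℝ} (ht : 0 ≤ t) (htY : t ≤ μ[Y]) :
    (μ[Y] - t) ^ 2 ≤ (∫ ω, Y ω ^ 2 ∂μ) * μ.real {ω | t < Y ω} := by
  set S := {ω | t < Y ω}
  have hS : NullMeasurableSet S μ := nullMeasurableSet_lt aemeasurable_const hY.aemeasurable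
  have hS1 : Integrable (S.indicator fun _ ↦ (1 : ℝ)) μ := (integrable_const 1).indicator₀ hS
  -- Cauchy–Schwarz, through the discriminant of this quadratic in `a`.
  have hquad : ∀ a : ℝ,
      0 ≤ (∫ ω, Y ω ^ 2 ∂μ) * (a * a) + (-2 * (μ[Y] - t)) * a + μ.real S := by
    intro a
    rcases le_or_gt 0 a with ha | ha
    · have hint : ∫ ω, 2 * a * (Y ω - t) ∂μ
          ≤ ∫ ω, (a ^ 2 * Y ω ^ 2 + S.indicator (fun _ ↦ 1) ω) ∂μ :=
        integral_mono ((hY.sub (integrable_const t)).const_mul _) ((hY2.const_mul _).add hS1)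
          fun ω ↦ two_mul_sub_le_sq_add_indicator ha ht
      rw [integral_const_mul, integral_sub hY (integrable_const t),
        integral_add (hY2.const_mul _) hS1, integral_const_mul, integral_indicator₀ hS] at hint
      simp only [integral_const, probReal_univ, smul_eq_mul, one_mul,
        measureReal_restrict_apply_univ] at hint
      nlinarith
    · have : 0 ≤ ∫ ω, Y ω ^ 2 ∂μ := integral_nonneg fun ω ↦ sq_nonneg _
      nlinarith [measureReal_nonneg (μ := μ) (s := S)]
  have := discrim_le_zero hquad
  rw [discrim] at this
  nlinarith

lemma integral_sub_sq_eq (hX : MemLp X 2 μ) (m : ℝ) :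
    ∫ ω, (X ω - m) ^ 2 ∂μ = absCentralMoment μ X 2 + (μ[X] - m) ^ 2 := by
  have hXm : MemLp (fun ω ↦ X ω - m) 2 μ := hX.sub (memLp_const m)
  rw [absCentralMoment_two_eq_variance hX.aemeasurable,
    ← variance_sub_const hX.aestronglyMeasurable m, variance_eq_sub hXm,
    integral_sub (hX.integrable one_le_two) (integrable_const m)]
  simp

lemma integral_sub_pow_four_le (hX : MemLp X 4 μ) (m : ℝ) :
    ∫ ω, (X ω - m) ^ 4 ∂μ ≤ 8 * (absCentralMoment μ X 4 + (μ[X] - m) ^ 4) := by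
  have hXe : Integrable (fun ω ↦ (X ω - μ[X]) ^ 4) μ :=
    MemLp.integrable_pow_of_even (n := 4) (hX.sub (memLp_const _)) (by decide)
  have hXm : Integrable (fun ω ↦ (X ω - m) ^ 4) μ :=
    MemLp.integrable_pow_of_even (n := 4) (hX.sub (memLp_const _)) (by decide)
  calc ∫ ω, (X ω - m) ^ 4 ∂μ
      ≤ ∫ ω, 8 * ((X ω - μ[X]) ^ 4 + (μ[X] - m) ^ 4) ∂μ :=
        integral_mono hXm ((hXe.add (integrable_const _)).const_mul 8) fun ω ↦ by
          simpa [show (2 : ℝ) ^ 3 = 8 by norm_num] using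
            (by decide : Even 4).add_pow_le (a := X ω - μ[X]) (b := μ[X] - m)
    _ = 8 * (absCentralMoment μ X 4 + (μ[X] - m) ^ 4) := by
        rw [integral_const_mul, integral_add hXe (integrable_const _),
          absCentralMoment_four_eq_integral]
        simp

theorem sq_sub_sq_le_mul_one_sub_measureReal_abs_sub_le (hX : MemLp X 4 μ) (m : ℝ) {r : ℝ}
    (hr : 0 ≤ r) (hrX : r ^ 2 ≤ ∫ ω, (X ω - m) ^ 2 ∂μ) :
    (∫ ω, (X ω - m) ^ 2 ∂μ - r ^ 2) ^ 2
      ≤ (∫ ω, (X ω - m) ^ 4 ∂μ) * (1 - μ.real {ω | |X ω - m| ≤ r}) := by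
  have hXm : MemLp (fun ω ↦ X ω - m) 4 μ := hX.sub (memLp_const m)
  have hPZ := paley_zygmund (hXm.mono_exponent (by norm_num)).integrable_sq
    (by simpa only [← pow_mul] using hXm.integrable_pow_of_even (n := 4) (by decide))
    (sq_nonneg r) hrX
  simp only [← pow_mul] at hPZ
  have hS : NullMeasurableSet {ω | r ^ 2 < (X ω - m) ^ 2} μ :=
    nullMeasurableSet_lt aemeasurable_const (hXm.aemeasurable.pow_const 2)
  have hcompl : {ω | r ^ 2 < (X ω - m) ^ 2}ᶜ = {ω | |X ω - m| ≤ r} := by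
    ext ω
    simp [sq_lt_sq, abs_of_nonneg hr]
  have hP := measureReal_add_measureReal_compl₀ hS
  rw [hcompl, probReal_univ] at hP
  rwa [← eq_sub_iff_add_eq.2 hP]

end

theorem levyConc_le_of_hypercontractive_general
    {Ω : Type*} [MeasurableSpace Ω] (μ : Measure Ω) [IsProbabilityMeasure μ]
    (X : Ω → ℝ) (hX4 : MemLp X 4 μ)
    (c : ℝ) (hc : 0 < c) (hhyp : Hypercontractive μ X c)
    (σ : ℝ) (hσ : 0 < σ) (hvar : absCentralMoment μ X 2 = σ ^ 2) :
    levyConc μ X (σ / 2) ≤ 1 - 9 / (128 * (c + 2) ^ 4) := by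
  refine ciSup_le fun a ↦ ?_
  set m := a + σ / 4 with hm
  set d := μ[X] - m
  have hA : ∫ ω, (X ω - m) ^ 2 ∂μ = σ ^ 2 + d ^ 2 := by
    rw [integral_sub_sq_eq (hX4.mono_exponent (by norm_num)) m, hvar]
  have hB : ∫ ω, (X ω - m) ^ 4 ∂μ ≤ 8 * (c ^ 4 * σ ^ 4 + d ^ 4) := by
    rw [Hypercontractive, hvar] at hhyp
    linarith [integral_sub_pow_four_le hX4 m]
  have hPZ := sq_sub_sq_le_mul_one_sub_measureReal_abs_sub_le hX4 m (r := σ / 4)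
    (by positivity) (by rw [hA]; nlinarith [sq_nonneg d])
  rw [hA] at hPZ
  have hδ : 9 / (128 * (c + 2) ^ 4) ≤ 1 - μ.real {ω | |X ω - m| ≤ σ / 4} := by
    refine le_of_mul_le_mul_right ?_ (by positivity : 0 < 8 * (c ^ 4 * σ ^ 4 + d ^ 4))
    calc _ ≤ (σ ^ 2 + d ^ 2 - (σ / 4) ^ 2) ^ 2 := nine_div_mul_pow_four_add_pow_four_le_sq hc.le
      _ ≤ _ := hPZ
      _ ≤ _ := by rw [mul_comm]; exact mul_le_mul_of_nonneg_left hB (by simp)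
  have hsub : {ω | a ≤ X ω ∧ X ω ≤ a + σ / 2} ⊆ {ω | |X ω - m| ≤ σ / 4} := by
    rintro ω ⟨h₁, h₂⟩
    show |X ω - m| ≤ σ / 4
    rw [abs_le]
    constructor <;> linarith
  calc (μ {ω | a ≤ X ω ∧ X ω ≤ a + σ / 2}).toReal
      ≤ μ.real {ω | |X ω - m| ≤ σ / 4} := measureReal_mono hsub
    _ ≤ 1 - 9 / (128 * (c + 2) ^ 4) := by linarith

/-- If `X` is `(c,2,4)`-hypercontractive with variance `σ² > 0`, then
`Q_X(σ/2) ≤ 1 - 9/(128 (c+2)⁴)`. -/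
theorem levyConc_le_of_hypercontractive
    {Ω : Type*} [MeasurableSpace Ω] (μ : Measure Ω) [IsProbabilityMeasure μ]
    (X : Ω → ℝ) (hX : Measurable X) (hX4 : MemLp X 4 μ)
    (c : ℝ) (hc : 0 < c) (hhyp : Hypercontractive μ X c)
    (σ : ℝ) (hσ : 0 < σ) (hvar : absCentralMoment μ X 2 = σ ^ 2) :
    levyConc μ X (σ / 2) ≤ 1 - 9 / (128 * (c + 2) ^ 4) :=
  levyConc_le_of_hypercontractive_general μ X hX4 c hc hhyp σ hσ hvar
end

section
/- Let X be a real-valued random variable with finite support, and let α = min{ Pr[X = x] : x ∈ ℝ, Pr[X = x] ≠ 0 } be the mass of its smallest atom. Then μ₄(X) ≤ (1/α)·(μ₂(X))²; equivalently, X is (c,2,4)-hypercontractive with c = α^{−1/4}. -/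
open MeasureTheory ProbabilityTheory

/-! On every atom `{X = x}` of positive mass, Markov's inequality gives
`α (x - E X)² ≤ μ.real {X = x} (x - E X)² ≤ μ₂(X)`.
A finitely valued `X` lives almost surely on such atoms, so `(X - E X)² ≤ μ₂(X) / α` almost
surely, and integrating `(X - E X)⁴ ≤ (μ₂(X) / α) (X - E X)²` gives `μ₄(X) ≤ μ₂(X)² / α`. -/

section

variable {Ω : Type*} [MeasurableSpace Ω] {μ : Measure Ω}

lemma integrable_comp_of_forall_mem_finset [IsFiniteMeasure μ] {β : Type*} [MeasurableSpace β]
    {X : Ω → β} (hX : Measurable X) {s : Finset β} (hs : ∀ ω, X ω ∈ s) {g : β → ℝ}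
    (hg : Measurable g) : Integrable (fun ω => g (X ω)) μ :=
  Integrable.of_bound (hg.comp hX).aestronglyMeasurable (∑ x ∈ s, |g x|) <|
    .of_forall fun ω =>
      Finset.single_le_sum (f := fun x => |g x|) (fun _ _ => abs_nonneg _) (hs ω)

lemma ae_measure_level_set_ne_zero {β : Type*} {X : Ω → β} (hX : (Set.range X).Countable) :
    ∀ᵐ ω ∂μ, μ {ω' | X ω' = X ω} ≠ 0 := by
  rw [ae_iff]
  refine measure_mono_null
    (t := ⋃ x ∈ {x ∈ Set.range X | μ {ω | X ω = x} = 0}, {ω | X ω = x})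
    (fun ω hω => Set.mem_biUnion ⟨Set.mem_range_self ω, not_not.mp hω⟩ rfl) ?_
  exact (measure_biUnion_null_iff (hX.mono (Set.sep_subset _ _))).mpr fun _ hx => hx.2

lemma absCentralMoment_of_even (X : Ω → ℝ) {j : ℕ} (hj : Even j) :
    absCentralMoment μ X j = ∫ ω, (X ω - ∫ ω', X ω' ∂μ) ^ j ∂μ := by
  simp only [absCentralMoment, hj.pow_abs]

lemma pow_abs_sub_mul_measureReal_le_absCentralMoment [IsFiniteMeasure μ] {X : Ω → ℝ}
    {j : ℕ} (hj : Integrable (fun ω => |X ω - ∫ ω', X ω' ∂μ| ^ j) μ) (x : ℝ) :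
    |x - ∫ ω', X ω' ∂μ| ^ j * μ.real {ω | X ω = x} ≤ absCentralMoment μ X j := by
  set m := ∫ ω', X ω' ∂μ
  have h_sub : {ω | X ω = x} ⊆ {ω | |x - m| ^ j ≤ |X ω - m| ^ j} := by
    rintro ω (hω : X ω = x)
    rw [Set.mem_ofPred_eq, hω]
  calc |x - m| ^ j * μ.real {ω | X ω = x}
      ≤ |x - m| ^ j * μ.real {ω | |x - m| ^ j ≤ |X ω - m| ^ j} :=
        mul_le_mul_of_nonneg_left (measureReal_mono h_sub) (by positivity)
    _ ≤ absCentralMoment μ X j :=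
        mul_meas_ge_le_integral_of_nonneg (.of_forall fun _ => by positivity) hj _

lemma absCentralMoment_four_le_of_ae_sq_le {X : Ω → ℝ} {K : ℝ}
    (h2 : Integrable (fun ω => (X ω - ∫ ω', X ω' ∂μ) ^ 2) μ)
    (hK : ∀ᵐ ω ∂μ, (X ω - ∫ ω', X ω' ∂μ) ^ 2 ≤ K) :
    absCentralMoment μ X 4 ≤ K * absCentralMoment μ X 2 := by
  rw [absCentralMoment_of_even X (by decide : Even 4), absCentralMoment_of_even X even_two,
    ← integral_const_mul]
  refine integral_mono_of_nonneg (.of_forall fun _ => by positivity) (h2.const_mul K) ?_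
  filter_upwards [hK] with ω hω
  calc (X ω - ∫ ω', X ω' ∂μ) ^ 4
      = (X ω - ∫ ω', X ω' ∂μ) ^ 2 * (X ω - ∫ ω', X ω' ∂μ) ^ 2 := by ring
    _ ≤ K * (X ω - ∫ ω', X ω' ∂μ) ^ 2 := by gcongr

end

lemma Real.rpow_neg_one_div_four_pow_four {α : ℝ} (hα : 0 ≤ α) :
    (α ^ (-(1 / 4 : ℝ))) ^ 4 = 1 / α := by
  rw [← Real.rpow_natCast, ← Real.rpow_mul hα]
  norm_num [Real.rpow_neg_one]

/-- A finitely supported random variable whose smallest atom has mass `α` is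
`(α^{-1/4},2,4)`-hypercontractive, i.e. `μ₄(X) ≤ (1/α) μ₂(X)²`. -/
theorem hypercontractive_of_finite_support
    {Ω : Type*} [MeasurableSpace Ω] (μ : Measure Ω) [IsProbabilityMeasure μ]
    (X : Ω → ℝ) (hX : Measurable X)
    (s : Finset ℝ) (hs : ∀ ω, X ω ∈ (s : Set ℝ))
    (α : ℝ)
    (hα : IsLeast {p : ℝ | ∃ x : ℝ, (μ {ω | X ω = x}).toReal = p ∧ p ≠ 0} α) :
    absCentralMoment μ X 4 ≤ (1 / α) * (absCentralMoment μ X 2) ^ 2 ∧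
      Hypercontractive μ X (α ^ (-(1 / 4 : ℝ))) := by
  obtain ⟨⟨x₀, hx₀, hα_ne⟩, hα_le⟩ := hα
  have hα_pos : 0 < α := (hx₀ ▸ ENNReal.toReal_nonneg).lt_of_ne' hα_ne
  have hint : ∀ k : ℕ, Integrable (fun ω => |X ω - ∫ ω', X ω' ∂μ| ^ k) μ := fun k =>
    integrable_comp_of_forall_mem_finset (g := fun x => |x - ∫ ω', X ω' ∂μ| ^ k) hX hs
      (by fun_prop)
  have hsq :
      ∀ᵐ ω ∂μ, (X ω - ∫ ω', X ω' ∂μ) ^ 2 ≤ absCentralMoment μ X 2 / α := by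
    have hrange : (Set.range X).Countable :=
      s.countable_toSet.mono (Set.range_subset_iff.mpr hs)
    filter_upwards [ae_measure_level_set_ne_zero (μ := μ) hrange] with ω hω
    rw [le_div_iff₀ hα_pos, ← sq_abs]
    calc |X ω - ∫ ω', X ω' ∂μ| ^ 2 * α
        ≤ |X ω - ∫ ω', X ω' ∂μ| ^ 2 * μ.real {ω' | X ω' = X ω} := by
          gcongr
          exact hα_le ⟨X ω, rfl, ENNReal.toReal_ne_zero.mpr ⟨hω, measure_ne_top μ _⟩⟩
      _ ≤ absCentralMoment μ X 2 := pow_abs_sub_mul_measureReal_le_absCentralMoment (hint 2) _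
  have h4 : absCentralMoment μ X 4 ≤ 1 / α * absCentralMoment μ X 2 ^ 2 := by
    have := absCentralMoment_four_le_of_ae_sq_le (by simpa only [sq_abs] using hint 2) hsq
    rwa [div_mul_eq_mul_div, ← sq, div_eq_inv_mul, ← one_div] at this
  exact ⟨h4, by rwa [Hypercontractive, Real.rpow_neg_one_div_four_pow_four hα_pos.le]⟩
end

section
/- (Le Cam's Poisson approximation) Let X₁, …, Xₙ be independent Bernoulli random variables with E[X_j] = p_j for each j, let Z = Σ_{i=1}^n Xᵢ and μ = Σ_{j=1}^n p_j > 0. Then d_TV(Z, Poi(μ)) ≤ (Σ_{i=1}^n pᵢ²)/(Σ_{i=1}^n pᵢ), where Poi(μ) denotes the Poisson distribution with mean μ. -/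
/-! The Stein–Chen method. For `B ⊆ ℕ` the solution `f` of the Stein equation
`λ f(k+1) - k f(k) = 1_B(k) - Po(λ)(B)` (with `f 0 = 0`) has increments bounded by `1/λ`,
because `P(Z ≤ k) / P(Z = k)` increases and `P(Z > k) / P(Z = k)` decreases for `Z ~ Po(λ)`.
Evaluating the equation at `W = ∑ Xᵢ` gives `P(W ∈ B) - Po(λ)(B) = E[λ f(W+1) - W f(W)]`,
and since `Xᵢ ∈ {0,1}` is independent of `Wᵢ = W - Xᵢ`, the `i`-th summand
`pᵢ E f(W+1) - E[Xᵢ f(W)]` equals `pᵢ² E[f(Wᵢ+2) - f(Wᵢ+1)]`. -/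

open MeasureTheory ProbabilityTheory

/-- Total variation distance between two distributions on `ℝ`:
`sup_{A measurable} |ν₁(A) - ν₂(A)|`. -/
noncomputable def dTV (ν₁ ν₂ : Measure ℝ) : ℝ :=
  ⨆ A : {s : Set ℝ // MeasurableSet s}, |(ν₁ A).toReal - (ν₂ A).toReal|

/-- The Poisson distribution with mean `m ≥ 0`, as a measure on `ℝ`. -/
noncomputable def poissonReal (m : ℝ) : Measure ℝ :=
  (ProbabilityTheory.poissonMeasure (Real.toNNReal m)).map (fun n : ℕ => (n : ℝ))

open Finset
open scoped NNReal

lemma measureReal_inter_Iic_eq_sum (μ : Measure ℕ) [IsFiniteMeasure μ] (B : Set ℕ) (k : ℕ) :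
    μ.real (B ∩ Set.Iic k) = ∑ m ∈ range (k + 1), B.indicator 1 m * μ.real {m} := by
  classical
  have (m : ℕ) : B.indicator 1 m * μ.real {m} = B.indicator (fun m => μ.real {m}) m := by
    by_cases h : m ∈ B <;> simp [h]
  simp_rw [this]
  rw [Finset.sum_indicator_eq_sum_filter, sum_measureReal_singleton]
  congr 1
  ext m
  simp [and_comm]

lemma measureReal_Iic_eq_sum (μ : Measure ℕ) [IsFiniteMeasure μ] (k : ℕ) :
    μ.real (Set.Iic k) = ∑ m ∈ range (k + 1), μ.real {m} := by
  simpa using measureReal_inter_Iic_eq_sum μ Set.univ k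

lemma measureReal_inter_Iic_succ (μ : Measure ℕ) [IsFiniteMeasure μ] (B : Set ℕ) (k : ℕ) :
    μ.real (B ∩ Set.Iic (k + 1)) =
      μ.real (B ∩ Set.Iic k) + B.indicator 1 (k + 1) * μ.real {k + 1} := by
  simp only [measureReal_inter_Iic_eq_sum, sum_range_succ _ (k + 1)]

lemma measureReal_Iic_succ (μ : Measure ℕ) [IsFiniteMeasure μ] (k : ℕ) :
    μ.real (Set.Iic (k + 1)) = μ.real (Set.Iic k) + μ.real {k + 1} := by
  simp only [measureReal_Iic_eq_sum, sum_range_succ _ (k + 1)]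

lemma probReal_Ioi_eq_one_sub (μ : Measure ℕ) [IsProbabilityMeasure μ] (k : ℕ) :
    μ.real (Set.Ioi k) = 1 - μ.real (Set.Iic k) := by
  rw [← Set.compl_Iic, probReal_compl_eq_one_sub measurableSet_Iic]

namespace ProbabilityTheory

lemma poissonMeasure_real_singleton_succ_mul (r : ℝ≥0) (k : ℕ) :
    Po(r).real {k + 1} * (k + 1) = Po(r).real {k} * r := by
  simp only [poissonMeasure_real_singleton, Nat.factorial_succ]
  push_cast
  field_simp
  ring

lemma hasSum_poissonMeasure_real_singleton (r : ℝ≥0) : HasSum (fun k => Po(r).real {k}) 1 := by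
  simpa only [poissonMeasure_real_singleton] using hasSum_one_poissonMeasure r

lemma hasSum_poissonMeasure_real_singleton_add (r : ℝ≥0) (k : ℕ) :
    HasSum (fun j => Po(r).real {j + (k + 1)}) (Po(r).real (Set.Ioi k)) := by
  rw [probReal_Ioi_eq_one_sub, measureReal_Iic_eq_sum]
  exact (hasSum_nat_add_iff' (k + 1)).mpr (hasSum_poissonMeasure_real_singleton r)

lemma poissonMeasure_real_singleton_mul_succ_le (r : ℝ≥0) {m k : ℕ} (h : m ≤ k) :
    Po(r).real {m} * Po(r).real {k + 1} ≤ Po(r).real {m + 1} * Po(r).real {k} := by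
  have hmk : ((m : ℝ) + 1) ≤ k + 1 := by exact_mod_cast Nat.succ_le_succ h
  refine le_of_mul_le_mul_right ?_ (by positivity : (0 : ℝ) < (m + 1) * (k + 1))
  calc Po(r).real {m} * Po(r).real {k + 1} * ((m + 1) * (k + 1))
      = Po(r).real {m} * Po(r).real {k} * r * (m + 1) := by
        linear_combination (Po(r).real {m} * (m + 1)) * poissonMeasure_real_singleton_succ_mul r k
    _ ≤ Po(r).real {m} * Po(r).real {k} * r * (k + 1) := by gcongr
    _ = Po(r).real {m + 1} * Po(r).real {k} * ((m + 1) * (k + 1)) := by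
        linear_combination (-Po(r).real {k} * (k + 1)) * poissonMeasure_real_singleton_succ_mul r m

lemma poissonMeasure_real_Iic_mul_le (r : ℝ≥0) (k : ℕ) :
    Po(r).real (Set.Iic k) * Po(r).real {k + 1} ≤
      Po(r).real (Set.Iic (k + 1)) * Po(r).real {k} := by
  rw [measureReal_Iic_eq_sum, measureReal_Iic_eq_sum, sum_range_succ' _ (k + 1), sum_mul, add_mul,
    sum_mul]
  refine le_add_of_le_of_nonneg (sum_le_sum fun m hm => ?_) (by positivity)
  exact poissonMeasure_real_singleton_mul_succ_le r (Nat.lt_succ_iff.mp (mem_range.mp hm))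

lemma poissonMeasure_real_Ioi_succ_mul_le (r : ℝ≥0) (k : ℕ) :
    Po(r).real (Set.Ioi (k + 1)) * Po(r).real {k} ≤
      Po(r).real (Set.Ioi k) * Po(r).real {k + 1} := by
  refine hasSum_le (fun j => ?_) ((hasSum_poissonMeasure_real_singleton_add r (k + 1)).mul_right _)
    ((hasSum_poissonMeasure_real_singleton_add r k).mul_right _)
  rw [← add_assoc j (k + 1) 1]
  have := poissonMeasure_real_singleton_mul_succ_le r (m := k) (k := j + (k + 1)) (by omega)
  linarith

def poissonSteinOperator (r : ℝ) (g : ℕ → ℝ) (k : ℕ) : ℝ := r * g (k + 1) - k * g k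

noncomputable def poissonSteinSolution (r : ℝ≥0) (B : Set ℕ) : ℕ → ℝ
  | 0 => 0
  | k + 1 => (Po(r).real (B ∩ Set.Iic k) - Po(r).real B * Po(r).real (Set.Iic k)) /
      (r * Po(r).real {k})

variable {r : ℝ≥0}

theorem poissonSteinOperator_poissonSteinSolution (hr : 0 < r) (B : Set ℕ) (k : ℕ) :
    poissonSteinOperator r (poissonSteinSolution r B) k = B.indicator 1 k - Po(r).real B := by
  rw [poissonSteinOperator]
  have hp (m : ℕ) : Po(r).real {m} ≠ 0 := (poissonMeasure_real_singleton_pos m hr).ne'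
  cases k with
  | zero =>
    simp only [poissonSteinSolution, measureReal_inter_Iic_eq_sum, measureReal_Iic_eq_sum,
      zero_add, sum_range_one, CharP.cast_eq_zero, zero_mul, sub_zero]
    field_simp [hp 0]
  | succ k =>
    simp only [poissonSteinSolution, measureReal_inter_Iic_succ, measureReal_Iic_succ]
    push_cast
    field_simp [hp k, hp (k + 1)]
    linear_combination (Po(r).real B * Po(r).real (Set.Iic k) - Po(r).real (B ∩ Set.Iic k)) *
      poissonMeasure_real_singleton_succ_mul r k

theorem poissonSteinSolution_succ_sub_le (hr : 0 < r) (B : Set ℕ) (k : ℕ) :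
    poissonSteinSolution r B (k + 2) - poissonSteinSolution r B (k + 1) ≤ (r : ℝ)⁻¹ := by
  have hIic := poissonMeasure_real_Iic_mul_le r k
  have hIoi := poissonMeasure_real_Ioi_succ_mul_le r k
  have hR : Po(r).real (B ∩ Set.Iic k) ≤ Po(r).real B := measureReal_mono Set.inter_subset_left
  have hind : B.indicator (1 : ℕ → ℝ) (k + 1) ≤ 1 := by
    by_cases h : k + 1 ∈ B <;> simp [h]
  simp only [poissonSteinSolution, measureReal_inter_Iic_succ, measureReal_Iic_succ]
  rw [probReal_Ioi_eq_one_sub, probReal_Ioi_eq_one_sub, measureReal_Iic_succ] at hIoi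
  rw [measureReal_Iic_succ] at hIic
  have hp := poissonMeasure_real_singleton_pos k hr
  have hp' := poissonMeasure_real_singleton_pos (k + 1) hr
  set p := Po(r).real {k}
  set p' := Po(r).real {k + 1}
  set A := Po(r).real (B ∩ Set.Iic k)
  set S := Po(r).real (Set.Iic k)
  set q := Po(r).real B
  have hA0 : 0 ≤ A := measureReal_nonneg
  -- the left side is `A (T' p - T p') - (q - A) (S' p - S p') + 1_B(k+1) p p'` with the tails
  -- `T = 1 - S`, and its first two terms are `≤ 0`
  have key : (A + B.indicator 1 (k + 1) * p' - q * (S + p')) * p - p' * (A - q * S) ≤ p * p' := by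
    nlinarith [mul_nonneg hA0 (sub_nonneg.2 hIoi), mul_nonneg (sub_nonneg.2 hR) (sub_nonneg.2 hIic),
      mul_le_mul_of_nonneg_right hind (mul_pos hp hp').le]
  rw [div_sub_div _ _ (by positivity) (by positivity), div_le_iff₀ (by positivity)]
  calc _ = r * ((A + B.indicator 1 (k + 1) * p' - q * (S + p')) * p - p' * (A - q * S)) := by ring
    _ ≤ r * (p * p') := by gcongr
    _ = (r : ℝ)⁻¹ * (r * p' * (r * p)) := by field_simp

lemma poissonSteinSolution_compl (B : Set ℕ) (k : ℕ) :
    poissonSteinSolution r Bᶜ k = -poissonSteinSolution r B k := by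
  cases k with
  | zero => simp [poissonSteinSolution]
  | succ k =>
    have h := measureReal_inter_add_sdiff (μ := Po(r)) (s := Set.Iic k)
      (.of_discrete : MeasurableSet B)
    simp only [poissonSteinSolution, probReal_compl_eq_one_sub (.of_discrete : MeasurableSet B),
      Set.inter_comm _ (Set.Iic k), ← Set.sdiff_eq, ← neg_div]
    congr 1
    linear_combination h

theorem abs_poissonSteinSolution_succ_sub_le (hr : 0 < r) (B : Set ℕ) (k : ℕ) :
    |poissonSteinSolution r B (k + 2) - poissonSteinSolution r B (k + 1)| ≤ (r : ℝ)⁻¹ := by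
  have h := poissonSteinSolution_succ_sub_le hr Bᶜ k
  simp only [poissonSteinSolution_compl] at h
  exact abs_le.mpr ⟨by linarith, poissonSteinSolution_succ_sub_le hr B k⟩

variable {Ω : Type*} [MeasurableSpace Ω] {μ : Measure Ω}

lemma integrable_comp_of_le [IsFiniteMeasure μ] {N : Ω → ℕ} (hN : Measurable N) {M : ℕ}
    (hNM : ∀ ω, N ω ≤ M) (g : ℕ → ℝ) : Integrable (fun ω => g (N ω)) μ :=
  .of_bound (Measurable.of_discrete.comp hN).aestronglyMeasurable (∑ j ∈ range (M + 1), |g j|)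
    (ae_of_all _ fun ω => single_le_sum (f := fun j => |g j|) (fun _ _ => abs_nonneg _)
      (mem_range.mpr (Nat.lt_succ_of_le (hNM ω))))

lemma IndepFun.integral_cast_mul_comp {Y V : Ω → ℕ} (hY : Measurable Y) (hV : Measurable V)
    (hYV : IndepFun Y V μ) (g : ℕ → ℝ) :
    ∫ ω, Y ω * g (V ω) ∂μ = (∫ ω, (Y ω : ℝ) ∂μ) * ∫ ω, g (V ω) ∂μ :=
  (hYV.comp (φ := fun k : ℕ => (k : ℝ)) (ψ := g) .of_discrete .of_discrete)
    |>.integral_mul_eq_mul_integral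
    (Measurable.of_discrete.comp hY).aestronglyMeasurable
    (Measurable.of_discrete.comp hV).aestronglyMeasurable

lemma IndepFun.integral_cast_mul_comp_add {Y V : Ω → ℕ} (hY : Measurable Y) (hV : Measurable V)
    (hY1 : ∀ ω, Y ω ≤ 1) (hYV : IndepFun Y V μ) (g : ℕ → ℝ) :
    ∫ ω, Y ω * g (V ω + Y ω) ∂μ = (∫ ω, (Y ω : ℝ) ∂μ) * ∫ ω, g (V ω + 1) ∂μ := by
  have h (ω : Ω) : Y ω * g (V ω + Y ω) = Y ω * g (V ω + 1) := by
    rcases Nat.le_one_iff_eq_zero_or_eq_one.mp (hY1 ω) with h | h <;> simp [h]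
  simp_rw [h]
  exact hYV.integral_cast_mul_comp hY hV (fun k => g (k + 1))

lemma IndepFun.integral_comp_add_add_one {Y V : Ω → ℕ} (hY : Measurable Y) (hV : Measurable V)
    (hY1 : ∀ ω, Y ω ≤ 1) (hYV : IndepFun Y V μ) {g : ℕ → ℝ}
    (hg₁ : Integrable (fun ω => g (V ω + 1)) μ) (hg₂ : Integrable (fun ω => g (V ω + 2)) μ) :
    ∫ ω, g (V ω + Y ω + 1) ∂μ =
      ∫ ω, g (V ω + 1) ∂μ + (∫ ω, (Y ω : ℝ) ∂μ) * ∫ ω, (g (V ω + 2) - g (V ω + 1)) ∂μ := by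
  have h (ω : Ω) : g (V ω + Y ω + 1) = g (V ω + 1) + Y ω * (g (V ω + 2) - g (V ω + 1)) := by
    rcases Nat.le_one_iff_eq_zero_or_eq_one.mp (hY1 ω) with h | h <;> simp [h]
  have hΔ : Integrable (fun ω => (Y ω : ℝ) * (g (V ω + 2) - g (V ω + 1))) μ :=
    (hg₂.sub hg₁).bdd_mul (Measurable.of_discrete.comp hY).aestronglyMeasurable
      (c := 1) (ae_of_all _ fun ω => by simpa using hY1 ω)
  simp_rw [h]
  rw [integral_add hg₁ hΔ, hYV.integral_cast_mul_comp hY hV (fun k => g (k + 2) - g (k + 1))]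

lemma IndepFun.integral_mul_integral_comp_add_sub {Y V : Ω → ℕ} (hY : Measurable Y)
    (hV : Measurable V) (hY1 : ∀ ω, Y ω ≤ 1) (hYV : IndepFun Y V μ) {g : ℕ → ℝ}
    (hg₁ : Integrable (fun ω => g (V ω + 1)) μ) (hg₂ : Integrable (fun ω => g (V ω + 2)) μ) :
    (∫ ω, (Y ω : ℝ) ∂μ) * ∫ ω, g (V ω + Y ω + 1) ∂μ - ∫ ω, Y ω * g (V ω + Y ω) ∂μ =
      (∫ ω, (Y ω : ℝ) ∂μ) ^ 2 * ∫ ω, (g (V ω + 2) - g (V ω + 1)) ∂μ := by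
  rw [hYV.integral_comp_add_add_one hY hV hY1 hg₁ hg₂, hYV.integral_cast_mul_comp_add hY hV hY1]
  ring

theorem integral_poissonSteinOperator_sum [IsFiniteMeasure μ] {ι : Type*} [Fintype ι]
    [DecidableEq ι] {Y : ι → Ω → ℕ} (hY : ∀ i, Measurable (Y i)) (hY1 : ∀ i ω, Y i ω ≤ 1)
    (hindep : iIndepFun Y μ) (g : ℕ → ℝ) :
    ∫ ω, poissonSteinOperator (∑ i, ∫ ω, (Y i ω : ℝ) ∂μ) g (∑ i, Y i ω) ∂μ =
      ∑ i, (∫ ω, (Y i ω : ℝ) ∂μ) ^ 2 *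
        ∫ ω, (g (∑ j ∈ univ.erase i, Y j ω + 2) - g (∑ j ∈ univ.erase i, Y j ω + 1)) ∂μ := by
  have hsum_le (s : Finset ι) (ω : Ω) : ∑ j ∈ s, Y j ω ≤ Fintype.card ι :=
    (sum_le_card_nsmul s _ 1 fun j _ => hY1 j ω).trans (by simpa using card_le_univ s)
  have hint (s : Finset ι) (g' : ℕ → ℝ) : Integrable (fun ω => g' (∑ j ∈ s, Y j ω)) μ :=
    integrable_comp_of_le (Finset.measurable_sum s fun j _ => hY j) (hsum_le s) g'
  have hYint (i : ι) : Integrable (fun ω => (Y i ω : ℝ) * g (∑ j, Y j ω)) μ :=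
    (hint univ g).bdd_mul (Measurable.of_discrete.comp (hY i)).aestronglyMeasurable (c := 1)
      (ae_of_all _ fun ω => by simpa using hY1 i ω)
  simp only [poissonSteinOperator]
  rw [integral_sub ((hint univ fun k => g (k + 1)).const_mul _) (hint univ fun k => k * g k),
    integral_const_mul, sum_mul]
  simp_rw [Nat.cast_sum, sum_mul]
  rw [integral_finsetSum _ fun i _ => hYint i, ← sum_sub_distrib]
  refine sum_congr rfl fun i _ => ?_
  have hindep_i : IndepFun (Y i) (fun ω => ∑ j ∈ univ.erase i, Y j ω) μ := by
    simpa only [Finset.sum_fn] using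
      (hindep.indepFun_finsetSum_of_notMem hY (notMem_erase i univ)).symm
  simp_rw [← sum_erase_add univ _ (mem_univ i)]
  exact hindep_i.integral_mul_integral_comp_add_sub (hY i)
    (Finset.measurable_sum _ fun j _ => hY j) (hY1 i) (hint _ fun k => g (k + 1))
    (hint _ fun k => g (k + 2))

theorem measureReal_preimage_sub_poissonMeasure_eq_integral [IsProbabilityMeasure μ]
    {N : Ω → ℕ} (hN : Measurable N) (hr : 0 < r) (B : Set ℕ) :
    μ.real (N ⁻¹' B) - Po(r).real B =
      ∫ ω, poissonSteinOperator r (poissonSteinSolution r B) (N ω) ∂μ := by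
  have hind (ω : Ω) : B.indicator 1 (N ω) = (N ⁻¹' B).indicator (1 : Ω → ℝ) ω := by
    by_cases h : N ω ∈ B <;> simp [h]
  simp_rw [poissonSteinOperator_poissonSteinSolution hr, hind]
  rw [integral_sub ((integrable_const 1).indicator (hN .of_discrete)) (integrable_const _),
    integral_indicator_one (hN .of_discrete), integral_const, probReal_univ, one_smul]

theorem abs_measureReal_sum_preimage_sub_poissonMeasure_le [IsProbabilityMeasure μ] {ι : Type*}
    [Fintype ι] {Y : ι → Ω → ℕ} (hY : ∀ i, Measurable (Y i)) (hY1 : ∀ i ω, Y i ω ≤ 1)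
    (hindep : iIndepFun Y μ) {p : ι → ℝ} (hp : ∀ i, p i = ∫ ω, (Y i ω : ℝ) ∂μ) (hr : 0 < r)
    (hrp : (r : ℝ) = ∑ i, p i) (B : Set ℕ) :
    |μ.real ((fun ω => ∑ i, Y i ω) ⁻¹' B) - Po(r).real B| ≤ (∑ i, p i ^ 2) / r := by
  classical
  have hsum := integral_poissonSteinOperator_sum hY hY1 hindep (poissonSteinSolution r B)
  simp_rw [← hp, ← hrp] at hsum
  rw [measureReal_preimage_sub_poissonMeasure_eq_integral (Finset.measurable_sum _ fun i _ => hY i)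
    hr, hsum, sum_div]
  refine (abs_sum_le_sum_abs _ _).trans (sum_le_sum fun i _ => ?_)
  rw [abs_mul, abs_sq, div_eq_mul_inv]
  gcongr
  simpa using norm_integral_le_of_norm_le_const (μ := μ) (ae_of_all _ fun ω =>
    (Real.norm_eq_abs _).trans_le (abs_poissonSteinSolution_succ_sub_le hr B _))

end ProbabilityTheory

lemma dTV_map_natCast_le {ν₁ ν₂ : Measure ℕ} {c : ℝ} (hc : 0 ≤ c)
    (h : ∀ B : Set ℕ, |ν₁.real B - ν₂.real B| ≤ c) :
    dTV (ν₁.map ((↑) : ℕ → ℝ)) (ν₂.map ((↑) : ℕ → ℝ)) ≤ c :=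
  Real.iSup_le (fun ⟨A, hA⟩ => by
    simpa only [Measure.map_apply .of_discrete hA, measureReal_def] using h (Nat.cast ⁻¹' A)) hc

/-- **Le Cam's Poisson approximation.** If `X₁, …, Xₙ` are independent Bernoulli
random variables with means `p₁, …, pₙ`, `Z = ∑ Xᵢ` and `m = ∑ pᵢ > 0`, then
`d_TV(Z, Poi(m)) ≤ (∑ pᵢ²)/(∑ pᵢ)`. -/
theorem le_cam_poisson_approximation
    {Ω : Type*} [MeasurableSpace Ω] (μ : Measure Ω) [IsProbabilityMeasure μ]
    (n : ℕ) (X : Fin n → Ω → ℝ) (hX : ∀ i, Measurable (X i))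
    (hBer : ∀ i ω, X i ω = 0 ∨ X i ω = 1)
    (hindep : iIndepFun X μ)
    (p : Fin n → ℝ) (hp : ∀ i, p i = ∫ ω, X i ω ∂μ)
    (hpos : 0 < ∑ i, p i) :
    dTV (μ.map (fun ω => ∑ i, X i ω)) (poissonReal (∑ i, p i))
      ≤ (∑ i, (p i) ^ 2) / (∑ i, p i) := by
  set Y : Fin n → Ω → ℕ := fun i ω => ⌊X i ω⌋₊
  have hXY (i : Fin n) (ω : Ω) : (Y i ω : ℝ) = X i ω := by
    rcases hBer i ω with h | h <;> simp [Y, h]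
  have hY (i : Fin n) : Measurable (Y i) := Nat.measurable_floor.comp (hX i)
  have hN : Measurable fun ω => ∑ i, Y i ω := Finset.measurable_sum _ fun i _ => hY i
  have hlaw : μ.map (fun ω => ∑ i, X i ω) = (μ.map fun ω => ∑ i, Y i ω).map ((↑) : ℕ → ℝ) := by
    rw [Measure.map_map .of_discrete hN]
    simp_rw [Function.comp_def, Nat.cast_sum, hXY]
  rw [hlaw, poissonReal]
  refine dTV_map_natCast_le (div_nonneg (sum_nonneg fun i _ => sq_nonneg _) hpos.le) fun B => ?_
  rw [map_measureReal_apply hN .of_discrete]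
  have h := abs_measureReal_sum_preimage_sub_poissonMeasure_le hY
    (fun i ω => by rcases hBer i ω with h | h <;> simp [Y, h])
    (hindep.comp (fun _ => Nat.floor) fun _ => Nat.measurable_floor)
    (fun i => by simp_rw [hXY]; exact hp i) (Real.toNNReal_pos.2 hpos)
    (Real.coe_toNNReal _ hpos.le) B
  rwa [Real.coe_toNNReal _ hpos.le] at h
end

section
/- Let a₁, …, aₙ be nonnegative real numbers, let θ ∈ (0,1), and let m ≤ n be such that for every i ≤ m one has aᵢ ≥ θ·Σ_{j=i}^n a_j. Then for every k ≤ m, Σ_{j=m+1}^n a_j ≤ (1−θ)^{m−k+1} · Σ_{j=k}^n a_j. In particular, if X₁, …, Xₙ are random variables with μ₂(X₁) ≥ … ≥ μ₂(Xₙ) whose ε-critical index exceeds m, this applies with aᵢ = μ₂(Xᵢ) and θ = ε²/c⁴, so the total variance of the tail beyond the critical index decays geometrically. -/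
/-- Geometric decay beyond the critical index: if `a₁, …, aₙ ≥ 0`, `θ ∈ (0,1)` and
`aᵢ ≥ θ ∑_{j=i}^n a_j` for all `i ≤ m`, then for every `k ≤ m`,
`∑_{j=m+1}^n a_j ≤ (1-θ)^{m-k+1} ∑_{j=k}^n a_j`.
(In particular this applies with `aᵢ = μ₂(Xᵢ)` and `θ = ε²/c⁴` when the
`ε`-critical index of `X₁, …, Xₙ` exceeds `m`.) -/
theorem tail_geometric_decay
    (n m : ℕ) (hmn : m ≤ n) (a : ℕ → ℝ)
    (ha_nonneg : ∀ j, 1 ≤ j → j ≤ n → 0 ≤ a j)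
    (θ : ℝ) (hθ : θ ∈ Set.Ioo (0 : ℝ) 1)
    (hcrit : ∀ i, 1 ≤ i → i ≤ m → θ * ∑ j ∈ Finset.Icc i n, a j ≤ a i) :
    ∀ k, 1 ≤ k → k ≤ m →
      ∑ j ∈ Finset.Icc (m + 1) n, a j
        ≤ (1 - θ) ^ (m - k + 1) * ∑ j ∈ Finset.Icc k n, a j := by
  obtain ⟨hθ0, hθ1⟩ := hθ
  -- one-step inequality
  have step : ∀ i, 1 ≤ i → i ≤ m →
      ∑ j ∈ Finset.Icc (i + 1) n, a j ≤ (1 - θ) * ∑ j ∈ Finset.Icc i n, a j := by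
    intro i hi1 him
    have hin : i ≤ n := him.trans hmn
    have hsplit : ∑ j ∈ Finset.Icc i n, a j = a i + ∑ j ∈ Finset.Icc (i + 1) n, a j := by
      rw [Finset.Icc_add_one_left_eq_Ioc, ← Finset.sum_Ioc_add_eq_sum_Icc hin]
      ring
    have := hcrit i hi1 him
    nlinarith
  -- main induction: for all t, k + t ≤ m → sum over Icc (k+t+1) n ≤ (1-θ)^(t+1) * sum Icc k n
  intro k hk1 hkm
  have main : ∀ t, k + t ≤ m →
      ∑ j ∈ Finset.Icc (k + t + 1) n, a j ≤ (1 - θ) ^ (t + 1) * ∑ j ∈ Finset.Icc k n, a j := by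
    intro t
    induction t with
    | zero =>
      intro h
      simpa using step k hk1 (by omega)
    | succ t ih =>
      intro h
      have h1 := step (k + t + 1) (by omega) (by omega)
      have h2 := ih (by omega)
      calc ∑ j ∈ Finset.Icc (k + (t+1) + 1) n, a j
          ≤ (1 - θ) * ∑ j ∈ Finset.Icc (k + t + 1) n, a j := by
            convert h1 using 4 <;> omega
        _ ≤ (1 - θ) * ((1 - θ) ^ (t + 1) * ∑ j ∈ Finset.Icc k n, a j) :=
            mul_le_mul_of_nonneg_left h2 (by linarith)
        _ = (1 - θ) ^ (t + 1 + 1) * ∑ j ∈ Finset.Icc k n, a j := by ring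
  have := main (m - k) (by omega)
  have hmk : k + (m - k) = m := by omega
  rw [hmk] at this
  simpa using this
end
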